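/- Let K be a field, a, b positive integers, and p = (c,d) a pair of integers with 0 < c < a, 0 < d < b and bc + ad ≥ ab; set I_p = (x^a, y^b, x^c y^d), J = (x^a, y^b) and m = min{a,b}. Then: (a) I_p^m = J·I_p^{m−1}, so the reduction number of I_p is strictly less than min{a,b}; (b) if q = (e,f) is a pair of positive integers with c ≤ e and d ≤ f, and I_q = (x^a, y^b, x^e y^f), then the reduction number of I_q with respect to J is at most the reduction number of I_p with respect to J. -/

import Mathlib

open MvPolynomial

/-- The monomial `x^c y^d` in `K[x,y]`. -/
noncomputable def mono (K : Type*) [Field K] (c d : ℕ) : MvPolynomial (Fin 2) K :=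
  X 0 ^ c * X 1 ^ d

/-- The ideal `J = (x^a, y^b)`. -/
noncomputable def Jab (K : Type*) [Field K] (a b : ℕ) : Ideal (MvPolynomial (Fin 2) K) :=
  Ideal.span {mono K a 0, mono K 0 b}

/-- For `A ⊆ {0,…,g}` with `g = gcd(a,b)`, the ideal `I_A` generated by the
monomials `x^(i·(a/g)) y^(b − i·(b/g))` for `i ∈ A`. -/
noncomputable def IA (K : Type*) [Field K] (a b : ℕ) (A : Finset ℕ) :
    Ideal (MvPolynomial (Fin 2) K) :=
  Ideal.span ((fun i : ℕ =>
    mono K (i * (a / Nat.gcd a b)) (b - i * (b / Nat.gcd a b))) '' (A : Set ℕ))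

/-- The reduction number of `I` with respect to `J = (x^a, y^b)`: the least `r ≥ 0`
with `I^(r+1) = J·I^r`. -/
noncomputable def redNum (K : Type*) [Field K] (a b : ℕ)
    (I : Ideal (MvPolynomial (Fin 2) K)) : ℕ :=
  sInf {r : ℕ | I ^ (r + 1) = Jab K a b * I ^ r}

section Helpers

variable {K : Type*} [Field K]

lemma mono_mul (c d e f : ℕ) : mono K c d * mono K e f = mono K (c + e) (d + f) := by
  simp only [mono, pow_add]; ring

lemma mono_pow (c d n : ℕ) : mono K c d ^ n = mono K (n * c) (n * d) := by
  simp only [mono, mul_pow, ← pow_mul, mul_comm n c, mul_comm n d]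

lemma span_triple (A B C : MvPolynomial (Fin 2) K) :
    Ideal.span {A, B, C} = Ideal.span {A, B} ⊔ Ideal.span {C} := by
  rw [← Ideal.span_union]
  congr 1
  ext x
  simp only [Set.mem_insert_iff, Set.mem_singleton_iff, Set.mem_union]
  tauto

lemma mono_mem_Jab_pow (a b i j n s t : ℕ) (hn : i + j = n) (hs : i * a ≤ s)
    (ht : j * b ≤ t) : mono K s t ∈ (Jab K a b) ^ n := by
  subst hn
  have h1 : (Ideal.span {mono K a 0}) ^ i * (Ideal.span {mono K 0 b}) ^ j
      ≤ (Jab K a b) ^ (i + j) := by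
    rw [pow_add]
    exact Ideal.mul_mono
      (Ideal.pow_right_mono (Ideal.span_mono (by simp)) i)
      (Ideal.pow_right_mono (Ideal.span_mono (by simp)) j)
  apply h1
  rw [Ideal.span_singleton_pow, Ideal.span_singleton_pow,
    Ideal.span_singleton_mul_span_singleton, Ideal.mem_span_singleton,
    mono_pow, mono_pow, mono_mul]
  refine ⟨mono K (s - i * a) (t - j * b), ?_⟩
  rw [mono_mul, show i * a + j * 0 + (s - i * a) = s by omega,
    show i * 0 + j * b + (t - j * b) = t by omega]

lemma natlem (a b c d : ℕ) (hca : c ≤ a) (h : a * b ≤ b * c + a * d) :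
    (a - c) * b ≤ a * d := by
  have h1 : (a - c) * b + c * b = a * b := by rw [← Nat.add_mul, Nat.sub_add_cancel hca]
  have h2 : c * b = b * c := Nat.mul_comm _ _
  linarith

/-- Binomial-type bound for ideals. -/
lemma sup_pow_le {R : Type*} [CommRing R] (J P : Ideal R) (n : ℕ) :
    (J ⊔ P) ^ (n + 1) ≤ J * (J ⊔ P) ^ n ⊔ P ^ (n + 1) := by
  induction n with
  | zero => simp
  | succ n ih =>
    calc (J ⊔ P) ^ (n + 2) = (J ⊔ P) ^ (n + 1) * (J ⊔ P) := pow_succ _ _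
      _ ≤ (J * (J ⊔ P) ^ n ⊔ P ^ (n + 1)) * (J ⊔ P) := Ideal.mul_mono_left ih
      _ ≤ J * (J ⊔ P) ^ (n + 1) ⊔ P ^ (n + 2) := by
          rw [Ideal.sup_mul]
          apply sup_le
          · refine le_sup_of_le_left (le_of_eq ?_)
            rw [mul_assoc, ← pow_succ]
          · rw [Ideal.mul_sup]
            apply sup_le
            · refine le_sup_of_le_left ?_
              rw [mul_comm]
              exact Ideal.mul_mono_right (Ideal.pow_right_mono le_sup_right _)
            · rw [← pow_succ]
              exact le_sup_right

/-- Key monotonicity lemma. -/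
lemma keyL {R : Type*} [CommRing R] (J Pc Pe W : Ideal R) (hW : W * Pc ≤ Pe) (r : ℕ) :
    W ^ (r + 1) * (J * (J ⊔ Pc) ^ r) ≤ J * (J ⊔ Pe) ^ r := by
  induction r with
  | zero => simpa using Ideal.mul_le_right
  | succ r ih =>
    have h1 : W ^ (r + 2) * (J * (J ⊔ Pc) ^ (r + 1))
        = W * (W ^ (r + 1) * (J * (J ⊔ Pc) ^ r)) * (J ⊔ Pc) := by ring
    rw [h1, Ideal.mul_sup]
    apply sup_le
    · calc W * (W ^ (r + 1) * (J * (J ⊔ Pc) ^ r)) * J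
          ≤ W * (J * (J ⊔ Pe) ^ r) * J := Ideal.mul_mono_left (Ideal.mul_mono_right ih)
        _ ≤ (J * (J ⊔ Pe) ^ r) * J := Ideal.mul_mono_left Ideal.mul_le_right
        _ ≤ J * (J ⊔ Pe) ^ (r + 1) := by
            rw [mul_assoc]
            refine Ideal.mul_mono_right ?_
            rw [pow_succ]
            exact Ideal.mul_mono_right le_sup_left
    · calc W * (W ^ (r + 1) * (J * (J ⊔ Pc) ^ r)) * Pc
          = (W ^ (r + 1) * (J * (J ⊔ Pc) ^ r)) * (W * Pc) := by ring
        _ ≤ (J * (J ⊔ Pe) ^ r) * Pe := Ideal.mul_mono ih hW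
        _ ≤ J * (J ⊔ Pe) ^ (r + 1) := by
            rw [mul_assoc]
            refine Ideal.mul_mono_right ?_
            rw [pow_succ]
            exact Ideal.mul_mono_right le_sup_right

end Helpers

theorem stmt8 (K : Type*) [Field K] (a b c d : ℕ) (hc : 0 < c) (hca : c < a)
    (hd : 0 < d) (hdb : d < b) (h : a * b ≤ b * c + a * d) :
    (Ideal.span {mono K a 0, mono K 0 b, mono K c d} ^ min a b
        = Jab K a b * Ideal.span {mono K a 0, mono K 0 b, mono K c d} ^ (min a b - 1))
    ∧ ∀ e f : ℕ, 0 < e → 0 < f → c ≤ e → d ≤ f →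
        redNum K a b (Ideal.span {mono K a 0, mono K 0 b, mono K e f})
          ≤ redNum K a b (Ideal.span {mono K a 0, mono K 0 b, mono K c d}) := by
  have hIeq : ∀ u v : ℕ,
      Ideal.span {mono K a 0, mono K 0 b, mono K u v}
        = Jab K a b ⊔ Ideal.span {mono K u v} := fun u v => span_triple _ _ _
  set J : Ideal (MvPolynomial (Fin 2) K) := Jab K a b with hJ
  set Pc : Ideal (MvPolynomial (Fin 2) K) := Ideal.span {mono K c d} with hPcdef
  set m : ℕ := min a b with hm
  have hm2 : 2 ≤ m := by omega
  -- the crucial membership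
  have hmem : mono K (m * c) (m * d) ∈ J ^ m := by
    rcases le_total a b with hab | hab
    · have hma : m = a := min_eq_left hab
      apply mono_mem_Jab_pow a b c (a - c) m (m * c) (m * d) (by omega)
      · rw [hma, Nat.mul_comm]
      · rw [hma]; exact natlem a b c d hca.le h
    · have hmb : m = b := min_eq_right hab
      apply mono_mem_Jab_pow a b (b - d) d m (m * c) (m * d) (by omega)
      · rw [hmb]
        exact natlem b a d c hdb.le (by have := Nat.mul_comm a b; linarith)
      · rw [hmb, Nat.mul_comm]
  -- `Pc^m` is swallowed
  have hPc : Pc ^ m ≤ J * (J ⊔ Pc) ^ (m - 1) := by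
    have hJm : J ^ m ≤ J * (J ⊔ Pc) ^ (m - 1) := by
      conv_lhs => rw [show m = 1 + (m - 1) by omega]
      rw [pow_add, pow_one]
      exact Ideal.mul_mono_right (Ideal.pow_right_mono le_sup_left _)
    refine le_trans ?_ hJm
    rw [hPcdef, Ideal.span_singleton_pow, mono_pow]
    exact (Ideal.span_singleton_le_iff_mem _).2 hmem
  -- part (a)
  have partA : (J ⊔ Pc) ^ m = J * (J ⊔ Pc) ^ (m - 1) := by
    apply le_antisymm
    · conv_lhs => rw [show m = (m - 1) + 1 by omega]
      refine (sup_pow_le J Pc (m - 1)).trans (sup_le le_rfl ?_)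
      rw [show (m - 1) + 1 = m by omega]
      exact hPc
    · calc J * (J ⊔ Pc) ^ (m - 1) ≤ (J ⊔ Pc) * (J ⊔ Pc) ^ (m - 1) :=
            Ideal.mul_mono_left le_sup_left
        _ = (J ⊔ Pc) ^ m := by rw [← pow_succ', show (m - 1) + 1 = m by omega]
  refine ⟨by rw [hIeq c d]; exact partA, ?_⟩
  -- part (b)
  intro e f he hf hce hdf
  have hSp : (m - 1) ∈ {r : ℕ |
      Ideal.span {mono K a 0, mono K 0 b, mono K c d} ^ (r + 1)
        = Jab K a b * Ideal.span {mono K a 0, mono K 0 b, mono K c d} ^ r} := by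
    show _ = _
    rw [hIeq c d, show (m - 1) + 1 = m by omega]
    exact partA
  set r0 : ℕ := redNum K a b (Ideal.span {mono K a 0, mono K 0 b, mono K c d}) with hr0def
  have hr0 : r0 ∈ {r : ℕ |
      Ideal.span {mono K a 0, mono K 0 b, mono K c d} ^ (r + 1)
        = Jab K a b * Ideal.span {mono K a 0, mono K 0 b, mono K c d} ^ r} := by
    rw [hr0def]
    unfold redNum
    exact Nat.sInf_mem ⟨m - 1, hSp⟩
  have hr0' : (J ⊔ Pc) ^ (r0 + 1) = J * (J ⊔ Pc) ^ r0 := by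
    have := hr0
    rwa [Set.mem_setOf_eq, hIeq c d] at this
  set Pe : Ideal (MvPolynomial (Fin 2) K) := Ideal.span {mono K e f} with hPedef
  set W : Ideal (MvPolynomial (Fin 2) K) := Ideal.span {mono K (e - c) (f - d)} with hWdef
  have hWPc : W * Pc = Pe := by
    rw [hWdef, hPcdef, hPedef, Ideal.span_singleton_mul_span_singleton, mono_mul,
      show e - c + c = e by omega, show f - d + d = f by omega]
  have hPe : Pe ^ (r0 + 1) ≤ J * (J ⊔ Pe) ^ r0 := by
    calc Pe ^ (r0 + 1) = W ^ (r0 + 1) * Pc ^ (r0 + 1) := by rw [← hWPc, mul_pow]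
      _
        ≤ W ^ (r0 + 1) * (J ⊔ Pc) ^ (r0 + 1) :=
          Ideal.mul_mono_right (Ideal.pow_right_mono le_sup_right _)
      _ = W ^ (r0 + 1) * (J * (J ⊔ Pc) ^ r0) := by rw [hr0']
      _ ≤ J * (J ⊔ Pe) ^ r0 := keyL J Pc Pe W hWPc.le r0
  have hq : (J ⊔ Pe) ^ (r0 + 1) = J * (J ⊔ Pe) ^ r0 := by
    apply le_antisymm
    · exact (sup_pow_le J Pe r0).trans (sup_le le_rfl hPe)
    · calc J * (J ⊔ Pe) ^ r0 ≤ (J ⊔ Pe) * (J ⊔ Pe) ^ r0 := Ideal.mul_mono_left le_sup_left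
        _ = (J ⊔ Pe) ^ (r0 + 1) := (pow_succ' _ _).symm
  have hqmem : r0 ∈ {r : ℕ |
      Ideal.span {mono K a 0, mono K 0 b, mono K e f} ^ (r + 1)
        = Jab K a b * Ideal.span {mono K a 0, mono K 0 b, mono K e f} ^ r} := by
    show _ = _
    rw [hIeq e f]
    exact hq
  unfold redNum
  exact Nat.sInf_le hqmem
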